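/- arXiv:2406.03632 — 2 statements merged into one kernel-verified Lean document; each statement's English description precedes it below -/
import Mathlib

section
/- The greedy matching algorithm (matching each vertex when its left endpoint is processed) and the delayed greedy matching algorithm (matching each vertex v_j to the free vertex v_i of smallest index i among processed-but-unmatched neighbours, when v_j is processed) produce the same matching on any graph with any fixed vertex order. -/
namespace Paper

/-- Has vertex `v` already been matched by the edge list `M`? -/
def matchedB {n : ℕ} (M : List (Fin n × Fin n)) (v : Fin n) : Bool :=
  M.any fun e => e.1 = v || e.2 = v

/-- One step of the greedy matching algorithm: process vertex `i`; if it is unmatched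
and has an unmatched neighbour, match it to the unmatched neighbour of smallest index. -/
def greedyStep {n : ℕ} (G : SimpleGraph (Fin n)) [DecidableRel G.Adj]
    (M : List (Fin n × Fin n)) (i : Fin n) : List (Fin n × Fin n) :=
  if matchedB M i then M
  else
    if h : (Finset.univ.filter fun j => G.Adj i j ∧ matchedB M j = false).Nonempty then
      (i, (Finset.univ.filter fun j => G.Adj i j ∧ matchedB M j = false).min' h) :: M
    else M

/-- The greedy matching algorithm, processing the vertices `v_1, …, v_n` in order. -/
def greedy {n : ℕ} (G : SimpleGraph (Fin n)) [DecidableRel G.Adj] : List (Fin n × Fin n) :=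
  (List.finRange n).foldl (greedyStep G) []

/-- The partial matching produced by the greedy algorithm after processing the
first `k` vertices. -/
def greedyPrefix {n : ℕ} (G : SimpleGraph (Fin n)) [DecidableRel G.Adj] (k : ℕ) :
    List (Fin n × Fin n) :=
  ((List.finRange n).take k).foldl (greedyStep G) []

/-- One step of the delayed greedy algorithm: state is (matching, free set `F`);
when processing `j`, if `j` has a neighbour in `F`, match `j` to the smallest-index
such neighbour and remove it from `F`; otherwise add `j` to `F`. -/
def delayedStep {n : ℕ} (G : SimpleGraph (Fin n)) [DecidableRel G.Adj]
    (s : List (Fin n × Fin n) × Finset (Fin n)) (j : Fin n) :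
    List (Fin n × Fin n) × Finset (Fin n) :=
  if h : (s.2.filter fun i => G.Adj i j).Nonempty then
    (((s.2.filter fun i => G.Adj i j).min' h, j) :: s.1,
      s.2.erase ((s.2.filter fun i => G.Adj i j).min' h))
  else (s.1, insert j s.2)

/-- The delayed greedy matching algorithm. -/
def delayedGreedy {n : ℕ} (G : SimpleGraph (Fin n)) [DecidableRel G.Adj] :
    List (Fin n × Fin n) :=
  ((List.finRange n).foldl (delayedStep G) ([], ∅)).1

/-- `M` is a matching of `G`: its members are edges of `G` and are pairwise
vertex-disjoint. -/
def IsMatchingL {n : ℕ} (G : SimpleGraph (Fin n)) (M : List (Fin n × Fin n)) : Prop :=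
  (∀ e ∈ M, G.Adj e.1 e.2) ∧
    ∀ e ∈ M, ∀ f ∈ M, e ≠ f → e.1 ≠ f.1 ∧ e.1 ≠ f.2 ∧ e.2 ≠ f.1 ∧ e.2 ≠ f.2

/-- A finite rooted tree on node set `Fin N`, given by a parent function and a
depth function (distance to the root). -/
structure RootedTree (N : ℕ) where
  parent : Fin N → Fin N
  root : Fin N
  depth : Fin N → ℕ
  depth_root : depth root = 0
  parent_root : parent root = root
  depth_parent : ∀ i, i ≠ root → depth (parent i) + 1 = depth i

/-- `T.Anc u w` : node `u` is an ancestor (possibly equal) of node `w`. -/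
def RootedTree.Anc {N : ℕ} (T : RootedTree N) (u w : Fin N) : Prop :=
  ∃ k : ℕ, T.parent^[k] w = u

/-- A node is a leaf if it has no children. -/
def RootedTree.IsLeaf {N : ℕ} (T : RootedTree N) (u : Fin N) : Prop :=
  ∀ w, T.parent w = u → w = u

/-- The data of an RDV representation: a rooted host tree `T` and, for each vertex `v`,
a downward path `P(v)` going from its top node `t v` down to its bottom node `b v`. -/
structure RDVData (N n : ℕ) where
  T : RootedTree N
  t : Fin n → Fin N
  b : Fin n → Fin N
  downward : ∀ v, T.Anc (t v) (b v)

/-- The node `u` lies on the downward path `P(v)`. -/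
def RDVData.onPath {N n : ℕ} (R : RDVData N n) (v : Fin n) (u : Fin N) : Prop :=
  R.T.Anc (R.t v) u ∧ R.T.Anc u (R.b v)

/-- `R` is an RDV representation of `G`: distinct vertices are adjacent iff their
downward paths share a node. -/
def RDVData.IsRep {N n : ℕ} (R : RDVData N n) (G : SimpleGraph (Fin n)) : Prop :=
  ∀ u w : Fin n, u ≠ w → (G.Adj u w ↔ ∃ node, R.onPath u node ∧ R.onPath w node)

/-- The identity enumeration `v_1, …, v_n` (i.e. the order on `Fin n`) is a bottom-up
enumeration: vertices are sorted by decreasing depth of the top node `t v`. -/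
def RDVData.BottomUp {N n : ℕ} (R : RDVData N n) : Prop :=
  ∀ i j : Fin n, i ≤ j → R.T.depth (R.t j) ≤ R.T.depth (R.t i)

/-- A planar (left-to-right) coordinate structure on a rooted tree: an injective
index on the leaves so that the leaf descendants of every node occupy a contiguous
range of indices, together with the leftmost leaf descendant `lmost` and rightmost
leaf descendant `rmost` of every node. -/
structure PlanarCoords {N : ℕ} (T : RootedTree N) where
  idx : Fin N → ℕ
  lmost : Fin N → Fin N
  rmost : Fin N → Fin N
  idx_inj : ∀ u w, T.IsLeaf u → T.IsLeaf w → idx u = idx w → u = w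
  lmost_leaf : ∀ u, T.IsLeaf (lmost u)
  lmost_desc : ∀ u, T.Anc u (lmost u)
  lmost_min : ∀ u lf, T.IsLeaf lf → T.Anc u lf → idx (lmost u) ≤ idx lf
  rmost_leaf : ∀ u, T.IsLeaf (rmost u)
  rmost_desc : ∀ u, T.Anc u (rmost u)
  rmost_max : ∀ u lf, T.IsLeaf lf → T.Anc u lf → idx lf ≤ idx (rmost u)
  contiguous : ∀ u lf lf' lf'', T.IsLeaf lf → T.IsLeaf lf' → T.IsLeaf lf'' →
    T.Anc u lf → T.Anc u lf' → idx lf ≤ idx lf'' → idx lf'' ≤ idx lf' → T.Anc u lf''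

/-- The x-coordinate of a node: the index of its leftmost leaf descendant. -/
def PlanarCoords.x {N : ℕ} {T : RootedTree N} (P : PlanarCoords T) (u : Fin N) : ℕ :=
  P.idx (P.lmost u)

/-- The closed neighbourhood `N[v]`. -/
def closedNbr {n : ℕ} (G : SimpleGraph (Fin n)) (v : Fin n) : Set (Fin n) :=
  insert v {w | G.Adj v w}

/-- `v` is a simple vertex: `N[v]` is a clique that can be ordered
`w_1, …, w_k` with `N[w_1] ⊆ N[w_2] ⊆ … ⊆ N[w_k]`. -/
def IsSimpleVx {n : ℕ} (G : SimpleGraph (Fin n)) (v : Fin n) : Prop :=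
  G.IsClique (closedNbr G v) ∧
    ∃ l : List (Fin n), (∀ w, w ∈ l ↔ w ∈ closedNbr G v) ∧
      l.Chain' fun a b => closedNbr G a ⊆ closedNbr G b

/-- The subgraph of `G` induced by the tail vertices `{v_i, …, v_n}`. -/
def tailGraph {n : ℕ} (G : SimpleGraph (Fin n)) (i : Fin n) : SimpleGraph (Fin n) where
  Adj a b := G.Adj a b ∧ i ≤ a ∧ i ≤ b
  symm := ⟨fun a b h => ⟨h.1.symm, h.2.2, h.2.1⟩⟩
  loopless := ⟨fun a h => G.loopless.irrefl a h.1⟩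

/-- `G` is chordal: every cycle of length at least 4 has a chord, i.e. an edge
between two (necessarily non-consecutive) vertices of the cycle that is not an
edge of the cycle. -/
def Chordal {V : Type*} (G : SimpleGraph V) : Prop :=
  ∀ (v : V) (c : G.Walk v v), c.IsCycle → 4 ≤ c.length →
    ∃ u w, u ∈ c.support ∧ w ∈ c.support ∧ G.Adj u w ∧ s(u, w) ∉ c.edges

/-- `S` is (the node set of) a subtree of the rooted tree `T`. -/
def IsSubtree {N : ℕ} (T : RootedTree N) (S : Set (Fin N)) : Prop :=
  S.Nonempty ∧ ∃ top ∈ S, (∀ u ∈ S, T.Anc top u) ∧ ∀ u ∈ S, u ≠ top → T.parent u ∈ S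

/-!
Every greedy edge `(i, m)` has `i < m`, and `m` is the first neighbour of `i` still unmatched
when `i` is processed. After the delayed algorithm has processed `v_0, …, v_{k-1}`, its matching
consists exactly of the greedy edges whose larger endpoint is below `k`, and its free set of the
vertices below `k` not covered by them. This survives processing `j`: if `i` is free and adjacent
to `j`, greedy matches `j` to a partner `≤ i`. So the smallest free neighbour of `j` is the greedy
partner of `j` when that partner is smaller than `j`, and `j` has no free neighbour otherwise.
-/

section GreedyInvariant

variable {n : ℕ}

lemma foldl_take_finRange_succ {β : Type*} (f : β → Fin n → β) (b : β) {k : ℕ} (hk : k < n) :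
    ((List.finRange n).take (k + 1)).foldl f b =
      f (((List.finRange n).take k).foldl f b) ⟨k, hk⟩ := by
  rw [List.take_add_one, List.foldl_append, List.getElem?_eq_getElem (by simpa using hk)]
  simp

lemma matchedB_eq_true_iff {M : List (Fin n × Fin n)} {v : Fin n} :
    matchedB M v = true ↔ ∃ e ∈ M, e.1 = v ∨ e.2 = v := by
  simp [matchedB]

lemma matchedB_eq_false_iff {M : List (Fin n × Fin n)} {v : Fin n} :
    matchedB M v = false ↔ ∀ e ∈ M, e.1 ≠ v ∧ e.2 ≠ v := by
  simp [matchedB]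

structure GreedyInv (G : SimpleGraph (Fin n)) (k : ℕ) (M : List (Fin n × Fin n)) : Prop where
  fst_lt : ∀ e ∈ M, (e.1 : ℕ) < k
  adj : ∀ e ∈ M, G.Adj e.1 e.2
  fst_lt_snd : ∀ e ∈ M, e.1 < e.2
  eq_of_mem : ∀ e ∈ M, ∀ f ∈ M, ∀ v, (e.1 = v ∨ e.2 = v) → (f.1 = v ∨ f.2 = v) → e = f
  skip : ∀ e ∈ M, ∀ w, G.Adj e.1 w → w < e.2 → ∃ f ∈ M, (f.1 = w ∨ f.2 = w) ∧ f.1 < e.1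
  maximal : ∀ v : Fin n, (v : ℕ) < k → matchedB M v = false →
    ∀ w, G.Adj v w → ∃ f ∈ M, (f.1 = w ∨ f.2 = w) ∧ f.1 < v

variable {G : SimpleGraph (Fin n)} {k : ℕ} {M : List (Fin n × Fin n)}

lemma GreedyInv.succ (h : GreedyInv G k M)
    (hk : ∀ v : Fin n, (v : ℕ) = k → matchedB M v = false →
      ∀ w, G.Adj v w → ∃ f ∈ M, (f.1 = w ∨ f.2 = w) ∧ f.1 < v) :
    GreedyInv G (k + 1) M where
  fst_lt e he := Nat.lt_succ_of_lt (h.fst_lt e he)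
  adj := h.adj
  fst_lt_snd := h.fst_lt_snd
  eq_of_mem := h.eq_of_mem
  skip := h.skip
  maximal v hv := (Nat.lt_succ_iff_lt_or_eq.1 hv).elim (h.maximal v) (hk v)

lemma GreedyInv.cons (h : GreedyInv G k M) {i m : Fin n} (hi : (i : ℕ) = k)
    (hiM : matchedB M i = false) (hmM : matchedB M m = false) (hadj : G.Adj i m)
    (hmin : ∀ w, G.Adj i w → matchedB M w = false → m ≤ w) :
    GreedyInv G (k + 1) ((i, m) :: M) := by
  rw [matchedB_eq_false_iff] at hiM hmM
  have hfresh : ∀ f ∈ M, ∀ v, (i = v ∨ m = v) → (f.1 = v ∨ f.2 = v) → False := by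
    rintro f hf v (rfl | rfl) (hv | hv)
    exacts [(hiM f hf).1 hv, (hiM f hf).2 hv, (hmM f hf).1 hv, (hmM f hf).2 hv]
  refine ⟨?_, ?_, ?_, ?_, ?_, ?_⟩
  · rw [List.forall_mem_cons]
    exact ⟨hi ▸ Nat.lt_succ_self _, fun e he => Nat.lt_succ_of_lt (h.fst_lt e he)⟩
  · exact List.forall_mem_cons.2 ⟨hadj, h.adj⟩
  · rw [List.forall_mem_cons]
    refine ⟨?_, h.fst_lt_snd⟩
    rcases lt_trichotomy i m with him | rfl | hmi
    · exact him
    · exact absurd hadj (G.loopless.irrefl i)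
    · obtain ⟨f, hf, hfi, -⟩ :=
        h.maximal m (hi ▸ hmi) (matchedB_eq_false_iff.2 hmM) i hadj.symm
      exact (hfresh f hf i (Or.inl rfl) hfi).elim
  · simp only [List.forall_mem_cons]
    exact ⟨⟨fun _ _ _ => trivial, fun f hf v he hf' => (hfresh f hf v he hf').elim⟩,
      fun e he => ⟨fun v he' hf' => (hfresh e he v hf' he').elim, h.eq_of_mem e he⟩⟩
  · rw [List.forall_mem_cons]
    refine ⟨fun w hw hwm => ?_, fun e he w hw hwe => ?_⟩
    · have hwM : matchedB M w = true := by
        by_contra hwM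
        exact (hmin w hw (Bool.eq_false_iff.2 hwM)).not_gt hwm
      obtain ⟨f, hf, hfw⟩ := matchedB_eq_true_iff.1 hwM
      exact ⟨f, List.mem_cons_of_mem _ hf, hfw, Fin.lt_def.2 (hi ▸ h.fst_lt f hf)⟩
    · obtain ⟨f, hf, hfw⟩ := h.skip e he w hw hwe
      exact ⟨f, List.mem_cons_of_mem _ hf, hfw⟩
  · intro v hv hvM w hw
    simp only [matchedB_eq_false_iff, List.mem_cons, forall_eq_or_imp] at hvM
    have hvk : (v : ℕ) < k := lt_of_le_of_ne (Nat.lt_succ_iff.1 hv) fun hvk =>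
      hvM.1.1 (Fin.ext (hi.trans hvk.symm))
    obtain ⟨f, hf, hfw⟩ := h.maximal v hvk (matchedB_eq_false_iff.2 hvM.2) w hw
    exact ⟨f, List.mem_cons_of_mem _ hf, hfw⟩

variable [DecidableRel G.Adj]

lemma GreedyInv.greedyStep (h : GreedyInv G k M) (hk : k < n) :
    GreedyInv G (k + 1) (greedyStep G M ⟨k, hk⟩) := by
  unfold Paper.greedyStep
  split_ifs with hmatched hfree
  · exact h.succ fun v hv hvM => by
      obtain rfl : v = ⟨k, hk⟩ := Fin.ext hv
      simp [hmatched] at hvM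
  · exact h.cons rfl (Bool.eq_false_iff.2 hmatched)
      (Finset.mem_filter.1 (Finset.min'_mem _ hfree)).2.2
      (Finset.mem_filter.1 (Finset.min'_mem _ hfree)).2.1
      fun w hw hwM => Finset.min'_le _ _ (by simp [hw, hwM])
  · refine h.succ fun v hv _ w hw => ?_
    obtain rfl : v = ⟨k, hk⟩ := Fin.ext hv
    have hwM : matchedB M w = true := by
      by_contra hwM
      exact hfree ⟨w, by simp [hw, Bool.eq_false_iff.2 hwM]⟩
    obtain ⟨f, hf, hfw⟩ := matchedB_eq_true_iff.1 hwM
    exact ⟨f, hf, hfw, h.fst_lt f hf⟩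

variable (G)

lemma greedyInv_greedyPrefix {k : ℕ} (hk : k ≤ n) : GreedyInv G k (greedyPrefix G k) := by
  induction k with
  | zero => exact ⟨by simp [greedyPrefix], by simp [greedyPrefix], by simp [greedyPrefix],
      by simp [greedyPrefix], by simp [greedyPrefix], by simp⟩
  | succ k ih =>
    rw [greedyPrefix, foldl_take_finRange_succ _ _ hk]
    exact (ih (by omega)).greedyStep hk

lemma greedy_eq_greedyPrefix : greedy G = greedyPrefix G n := by
  rw [greedyPrefix, List.take_of_length_le (by simp), greedy]

lemma greedyInv_greedy : GreedyInv G n (greedy G) :=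
  greedy_eq_greedyPrefix G ▸ greedyInv_greedyPrefix G le_rfl

end GreedyInvariant

section DelayedGreedy

variable {n : ℕ} (G : SimpleGraph (Fin n)) [DecidableRel G.Adj]

def greedyUpTo (k : ℕ) : Finset (Fin n × Fin n) :=
  (greedy G).toFinset.filter fun e => (e.2 : ℕ) < k

def freeUpTo (k : ℕ) : Finset (Fin n) :=
  Finset.univ.filter fun v => (v : ℕ) < k ∧ ∀ e ∈ greedyUpTo G k, e.1 ≠ v ∧ e.2 ≠ v

def delayedPrefix (k : ℕ) : List (Fin n × Fin n) × Finset (Fin n) :=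
  ((List.finRange n).take k).foldl (delayedStep G) ([], ∅)

variable {G}

lemma mem_greedyUpTo {k : ℕ} {e : Fin n × Fin n} :
    e ∈ greedyUpTo G k ↔ e ∈ greedy G ∧ (e.2 : ℕ) < k := by
  simp [greedyUpTo]

lemma mem_freeUpTo {k : ℕ} {v : Fin n} :
    v ∈ freeUpTo G k ↔ (v : ℕ) < k ∧ ∀ e ∈ greedy G, (e.2 : ℕ) < k → e.1 ≠ v ∧ e.2 ≠ v := by
  simp [freeUpTo, greedyUpTo]

lemma mem_greedyUpTo_succ {j : Fin n} {e : Fin n × Fin n} :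
    e ∈ greedyUpTo G (j + 1) ↔ e ∈ greedyUpTo G j ∨ e ∈ greedy G ∧ e.2 = j := by
  simp only [mem_greedyUpTo, Nat.lt_succ_iff_lt_or_eq, Fin.ext_iff]
  tauto

lemma mem_freeUpTo_succ {j v : Fin n} :
    v ∈ freeUpTo G (j + 1) ↔
      (v ∈ freeUpTo G j ∨ v = j) ∧ ∀ e ∈ greedy G, e.2 = j → e.1 ≠ v ∧ e.2 ≠ v := by
  simp only [mem_freeUpTo, Nat.lt_succ_iff_lt_or_eq, Fin.ext_iff]
  constructor
  · rintro ⟨hv | hv, hfree⟩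
    · exact ⟨Or.inl ⟨hv, fun e he hej => hfree e he (Or.inl hej)⟩,
        fun e he hej => hfree e he (Or.inr hej)⟩
    · exact ⟨Or.inr hv, fun e he hej => hfree e he (Or.inr hej)⟩
  · rintro ⟨⟨hv, hfree⟩ | hv, hfree'⟩
    · exact ⟨Or.inl hv, fun e he => (Or.elim · (hfree e he) (hfree' e he))⟩
    · refine ⟨Or.inr hv, fun e he hej => hej.elim (fun hej => ?_) (hfree' e he)⟩
      have := Fin.lt_def.1 ((greedyInv_greedy G).fst_lt_snd e he)
      exact ⟨fun h => by omega, fun h => by omega⟩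

-- Unless `i` is the partner of `j`, `i` was matched beyond `j` or not at all, so `j` was already
-- taken when greedy processed `i`.
lemma exists_greedy_snd_eq_of_adj {i j : Fin n} (hi : i ∈ freeUpTo G j) (hadj : G.Adj i j) :
    ∃ e ∈ greedy G, e.2 = j ∧ e.1 ≤ i := by
  have hI := greedyInv_greedy G
  obtain ⟨hij, hfree⟩ := mem_freeUpTo.1 hi
  suffices h : ∃ e ∈ greedy G, (e.1 = j ∨ e.2 = j) ∧ e.1 ≤ i by
    obtain ⟨e, he, hej | hej, hei⟩ := h
    · exact absurd (hej ▸ hei) (not_le.2 (Fin.lt_def.2 hij))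
    · exact ⟨e, he, hej, hei⟩
  cases hiM : matchedB (greedy G) i
  · obtain ⟨e, he, hej, hei⟩ := hI.maximal i i.isLt hiM j hadj
    exact ⟨e, he, hej, hei.le⟩
  · obtain ⟨f, hf, hfi⟩ := matchedB_eq_true_iff.1 hiM
    have hjf : (j : ℕ) ≤ f.2 := not_lt.1 fun hf2 => by
      rcases hfi with h | h
      · exact (hfree f hf hf2).1 h
      · exact (hfree f hf hf2).2 h
    have hf1 : f.1 = i := hfi.resolve_right fun h => by
      rw [h] at hjf
      omega
    rcases (Nat.lt_or_eq_of_le hjf) with hjf | hjf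
    · obtain ⟨e, he, hej, hei⟩ := hI.skip f hf j (hf1 ▸ hadj) (Fin.lt_def.2 hjf)
      exact ⟨e, he, hej, hf1 ▸ hei.le⟩
    · exact ⟨f, hf, Or.inr (Fin.ext hjf.symm), hf1.le⟩

lemma greedy_eq_of_snd_eq {e f : Fin n × Fin n} (he : e ∈ greedy G) (hf : f ∈ greedy G)
    (hef : e.2 = f.2) : e = f :=
  (greedyInv_greedy G).eq_of_mem e he f hf f.2 (Or.inr hef) (Or.inr rfl)

lemma greedyUpTo_succ_of_mem {e₀ : Fin n × Fin n} (he₀ : e₀ ∈ greedy G) :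
    greedyUpTo G (e₀.2 + 1) = insert e₀ (greedyUpTo G e₀.2) := by
  ext e
  rw [mem_greedyUpTo_succ, Finset.mem_insert]
  refine or_comm.trans (or_congr_left ⟨fun h => ?_, ?_⟩)
  · exact greedy_eq_of_snd_eq h.1 he₀ h.2
  · rintro rfl
    exact ⟨he₀, rfl⟩

lemma freeUpTo_succ_of_mem {e₀ : Fin n × Fin n} (he₀ : e₀ ∈ greedy G) :
    freeUpTo G (e₀.2 + 1) = (freeUpTo G e₀.2).erase e₀.1 := by
  ext v
  rw [mem_freeUpTo_succ, Finset.mem_erase]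
  constructor
  · rintro ⟨hv | rfl, hfree⟩
    · exact ⟨(hfree e₀ he₀ rfl).1.symm, hv⟩
    · exact absurd rfl (hfree e₀ he₀ rfl).2
  · rintro ⟨hv₀, hv⟩
    refine ⟨Or.inl hv, fun e he hej => ?_⟩
    obtain rfl := greedy_eq_of_snd_eq he he₀ hej
    have hlt := (mem_freeUpTo.1 hv).1
    exact ⟨Ne.symm hv₀, fun h => by rw [h] at hlt; exact lt_irrefl _ hlt⟩

lemma fst_mem_freeUpTo {e₀ : Fin n × Fin n} (he₀ : e₀ ∈ greedy G) : e₀.1 ∈ freeUpTo G e₀.2 := by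
  refine mem_freeUpTo.2 ⟨(greedyInv_greedy G).fst_lt_snd e₀ he₀, fun e he he2 => ?_⟩
  have hne : e ≠ e₀ := by
    rintro rfl
    exact lt_irrefl _ he2
  exact ⟨fun h => hne ((greedyInv_greedy G).eq_of_mem e he e₀ he₀ _ (Or.inl h) (Or.inl rfl)),
    fun h => hne ((greedyInv_greedy G).eq_of_mem e he e₀ he₀ _ (Or.inr h) (Or.inl rfl))⟩

lemma fst_le_of_mem_freeUpTo {e₀ : Fin n × Fin n} (he₀ : e₀ ∈ greedy G) {i : Fin n}
    (hi : i ∈ freeUpTo G e₀.2) (hadj : G.Adj i e₀.2) : e₀.1 ≤ i := by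
  obtain ⟨e, he, he2, hei⟩ := exists_greedy_snd_eq_of_adj hi hadj
  exact greedy_eq_of_snd_eq he he₀ he2 ▸ hei

lemma greedyUpTo_succ_of_forall_snd_ne {j : Fin n} (hj : ∀ e ∈ greedy G, e.2 ≠ j) :
    greedyUpTo G (j + 1) = greedyUpTo G j := by
  ext e
  rw [mem_greedyUpTo_succ, or_iff_left fun h => hj e h.1 h.2]

lemma freeUpTo_succ_of_forall_snd_ne {j : Fin n} (hj : ∀ e ∈ greedy G, e.2 ≠ j) :
    freeUpTo G (j + 1) = insert j (freeUpTo G j) := by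
  ext v
  rw [mem_freeUpTo_succ, Finset.mem_insert, or_comm]
  exact and_iff_left fun e he hej => absurd hej (hj e he)

lemma delayedStep_eq {j : Fin n} {s : List (Fin n × Fin n) × Finset (Fin n)}
    (hs₁ : s.1.toFinset = greedyUpTo G j) (hs₂ : s.2 = freeUpTo G j) :
    (delayedStep G s j).1.toFinset = greedyUpTo G (j + 1) ∧
      (delayedStep G s j).2 = freeUpTo G (j + 1) := by
  unfold delayedStep
  rw [hs₂]
  by_cases hj : ∃ e₀ ∈ greedy G, e₀.2 = j
  · obtain ⟨e₀, he₀, rfl⟩ := hj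
    have hmem : e₀.1 ∈ (freeUpTo G e₀.2).filter (G.Adj · e₀.2) :=
      Finset.mem_filter.2 ⟨fst_mem_freeUpTo he₀, (greedyInv_greedy G).adj e₀ he₀⟩
    have hmin : ((freeUpTo G e₀.2).filter (G.Adj · e₀.2)).min' ⟨_, hmem⟩ = e₀.1 :=
      le_antisymm (Finset.min'_le _ _ hmem) <| by
        obtain ⟨hfree, hadj⟩ := Finset.mem_filter.1 (Finset.min'_mem _ ⟨_, hmem⟩)
        exact fst_le_of_mem_freeUpTo he₀ hfree hadj
    rw [dif_pos ⟨_, hmem⟩, hmin, greedyUpTo_succ_of_mem he₀, freeUpTo_succ_of_mem he₀]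
    simp [hs₁]
  · push Not at hj
    have hempty : ¬((freeUpTo G j).filter (G.Adj · j)).Nonempty := by
      rintro ⟨i, hi⟩
      obtain ⟨hfree, hadj⟩ := Finset.mem_filter.1 hi
      obtain ⟨e, he, hej, -⟩ := exists_greedy_snd_eq_of_adj hfree hadj
      exact hj e he hej
    rw [dif_neg hempty, greedyUpTo_succ_of_forall_snd_ne hj, freeUpTo_succ_of_forall_snd_ne hj]
    exact ⟨hs₁, rfl⟩

variable (G)

lemma delayedPrefix_eq {k : ℕ} (hk : k ≤ n) :
    (delayedPrefix G k).1.toFinset = greedyUpTo G k ∧ (delayedPrefix G k).2 = freeUpTo G k := by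
  induction k with
  | zero =>
    refine ⟨by simp [delayedPrefix, greedyUpTo], ?_⟩
    ext v
    simp [delayedPrefix, freeUpTo]
  | succ k ih =>
    obtain ⟨h₁, h₂⟩ := ih (by omega)
    rw [delayedPrefix, foldl_take_finRange_succ _ _ hk]
    exact delayedStep_eq (j := ⟨k, hk⟩) h₁ h₂

lemma delayedGreedy_eq_delayedPrefix : delayedGreedy G = (delayedPrefix G n).1 := by
  rw [delayedPrefix, List.take_of_length_le (by simp), delayedGreedy]

lemma greedyUpTo_self : greedyUpTo G n = (greedy G).toFinset :=
  Finset.filter_true_of_mem fun e _ => e.2.isLt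

end DelayedGreedy

/-- The greedy algorithm and the delayed greedy algorithm produce the
same matching on any graph with any fixed vertex order. -/
theorem stmt1 {n : ℕ} (G : SimpleGraph (Fin n)) [DecidableRel G.Adj] :
    (greedy G).toFinset = (delayedGreedy G).toFinset := by
  rw [delayedGreedy_eq_delayedPrefix, (delayedPrefix_eq G le_rfl).1, greedyUpTo_self]
end Paper
end

section
/- Let G be a graph with an RDV representation on a rooted tree T whose nodes are assigned coordinates: x(i) is the index of the leftmost leaf descendant of node i in a fixed left-to-right leaf order, and y(i) is the depth of i. For each vertex v define the horizontal segment s(v) from (x(t(v)), y(t(v))) to (x(r(t(v))), y(t(v))), where r(t(v)) is the rightmost leaf descendant of t(v), and the vertical segment q(v) from (x(b(v)), y(t(v))) to (x(b(v)), y(b(v))). Then for i < j in a bottom-up enumeration, (v_i,v_j) is an edge of G if and only if q(v_j) intersects s(v_i). -/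
/-!
In a bottom-up enumeration `t(v_j)` is no deeper than `t(v_i)`, so the paths `P(v_i)` and
`P(v_j)` meet iff `P(v_j)` passes through `t(v_i)`, i.e. iff `t(v_i)` is an ancestor of `b(v_j)`.
In planar coordinates, `u` is an ancestor of `w` iff `x(u) ≤ x(w) ≤ x(r(u))` and `y(u) ≤ y(w)`:
the leaves below `u` form the contiguous range `[x(u), x(r(u))]`, so the leftmost leaf of `w`
lies below `u`, making `u` and `w` comparable, and the depths decide the direction.
-/

namespace Paper

namespace RootedTree

variable {N : ℕ} (T : RootedTree N)

theorem anc_refl (u : Fin N) : T.Anc u u := ⟨0, rfl⟩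

variable {T}

theorem Anc.trans {u w z : Fin N} (h₁ : T.Anc u w) (h₂ : T.Anc w z) : T.Anc u z := by
  obtain ⟨k, rfl⟩ := h₁
  obtain ⟨m, rfl⟩ := h₂
  exact ⟨k + m, Function.iterate_add_apply _ _ _ _⟩

variable (T)

theorem depth_parent_le (u : Fin N) : T.depth (T.parent u) ≤ T.depth u := by
  by_cases hu : u = T.root
  · rw [hu, T.parent_root]
  · exact (T.depth_parent u hu).le.trans' (Nat.le_succ _)

theorem depth_iterate_parent_le (k : ℕ) (u : Fin N) : T.depth (T.parent^[k] u) ≤ T.depth u := by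
  induction k generalizing u with
  | zero => rfl
  | succ k ih => exact (ih _).trans (T.depth_parent_le u)

/-- Going up strictly decreases the depth until the root, which is a fixed point of `parent`. -/
theorem iterate_parent_eq_self_of_depth_le (k : ℕ) (u : Fin N)
    (h : T.depth u ≤ T.depth (T.parent^[k] u)) : T.parent^[k] u = u := by
  induction k generalizing u with
  | zero => rfl
  | succ k ih =>
    rw [Function.iterate_succ_apply] at h ⊢
    by_cases hu : u = T.root
    · have hfix : T.parent u = u := hu ▸ T.parent_root
      rw [hfix] at h ⊢
      exact ih u h
    · have hstep := T.depth_parent u hu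
      have := T.depth_iterate_parent_le k (T.parent u)
      omega

variable {T}

theorem Anc.depth_le {u w : Fin N} (h : T.Anc u w) : T.depth u ≤ T.depth w := by
  obtain ⟨k, rfl⟩ := h
  exact T.depth_iterate_parent_le k w

theorem Anc.eq_of_depth_le {u w : Fin N} (h : T.Anc u w) (hd : T.depth w ≤ T.depth u) :
    u = w := by
  obtain ⟨k, rfl⟩ := h
  exact T.iterate_parent_eq_self_of_depth_le k w hd

theorem Anc.total_of_anc {u u' w : Fin N} (h : T.Anc u w) (h' : T.Anc u' w) :
    T.Anc u u' ∨ T.Anc u' u := by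
  obtain ⟨k, rfl⟩ := h
  obtain ⟨m, hm⟩ := h'
  rcases le_total k m with hkm | hmk
  · exact Or.inr ⟨m - k, by rw [← Function.iterate_add_apply, Nat.sub_add_cancel hkm, hm]⟩
  · exact Or.inl ⟨k - m, by rw [← hm, ← Function.iterate_add_apply, Nat.sub_add_cancel hmk]⟩

theorem Anc.anc_of_depth_le {u u' w : Fin N} (h : T.Anc u w) (h' : T.Anc u' w)
    (hd : T.depth u' ≤ T.depth u) : T.Anc u' u := by
  rcases h.total_of_anc h' with hu | hu
  · exact hu.eq_of_depth_le hd ▸ T.anc_refl u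
  · exact hu

end RootedTree

namespace PlanarCoords

variable {N : ℕ} {T : RootedTree N} (P : PlanarCoords T)

theorem x_mem_of_anc {u w : Fin N} (h : T.Anc u w) :
    P.x u ≤ P.x w ∧ P.x w ≤ P.idx (P.rmost u) :=
  have hleaf : T.Anc u (P.lmost w) := h.trans (P.lmost_desc w)
  ⟨P.lmost_min u _ (P.lmost_leaf w) hleaf, P.rmost_max u _ (P.lmost_leaf w) hleaf⟩

theorem anc_of_x_mem {u w : Fin N} (hl : P.x u ≤ P.x w) (hr : P.x w ≤ P.idx (P.rmost u))
    (hd : T.depth u ≤ T.depth w) : T.Anc u w := by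
  have hleaf : T.Anc u (P.lmost w) :=
    P.contiguous u _ _ _ (P.lmost_leaf u) (P.rmost_leaf u) (P.lmost_leaf w)
      (P.lmost_desc u) (P.rmost_desc u) hl hr
  exact (P.lmost_desc w).anc_of_depth_le hleaf hd

theorem anc_iff {u w : Fin N} :
    T.Anc u w ↔ P.x u ≤ P.x w ∧ P.x w ≤ P.idx (P.rmost u) ∧ T.depth u ≤ T.depth w :=
  ⟨fun h => ⟨(P.x_mem_of_anc h).1, (P.x_mem_of_anc h).2, h.depth_le⟩,
    fun ⟨hl, hr, hd⟩ => P.anc_of_x_mem hl hr hd⟩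

end PlanarCoords

namespace RDVData

variable {N n : ℕ} (R : RDVData N n)

/-- The common node can always be taken to be `t u`. -/
theorem exists_onPath_iff_anc {u w : Fin n} (hd : R.T.depth (R.t w) ≤ R.T.depth (R.t u)) :
    (∃ node, R.onPath u node ∧ R.onPath w node) ↔ R.T.Anc (R.t u) (R.b w) := by
  constructor
  · rintro ⟨node, ⟨hu, -⟩, -, hw⟩
    exact hu.trans hw
  · intro h
    exact ⟨R.t u, ⟨R.T.anc_refl _, R.downward u⟩, h.anc_of_depth_le (R.downward w) hd, h⟩

end RDVData

/-- With planar coordinates, for `i < j` in a bottom-up enumeration,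
`(v_i, v_j)` is an edge iff the vertical segment `q(v_j)` intersects the horizontal
segment `s(v_i)`, i.e. iff `x(t(v_i)) ≤ x(b(v_j)) ≤ x(r(t(v_i)))` and
`y(t(v_j)) ≤ y(t(v_i)) ≤ y(b(v_j))`. -/
theorem stmt3 {N n : ℕ} (G : SimpleGraph (Fin n)) (R : RDVData N n)
    (P : PlanarCoords R.T) (hrep : R.IsRep G) (hbu : R.BottomUp) :
    ∀ i j : Fin n, i < j →
      (G.Adj i j ↔
        P.x (R.t i) ≤ P.x (R.b j) ∧ P.x (R.b j) ≤ P.idx (P.rmost (R.t i)) ∧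
          R.T.depth (R.t j) ≤ R.T.depth (R.t i) ∧
          R.T.depth (R.t i) ≤ R.T.depth (R.b j)) := by
  intro i j hij
  have hdepth : R.T.depth (R.t j) ≤ R.T.depth (R.t i) := hbu i j hij.le
  rw [hrep i j hij.ne, R.exists_onPath_iff_anc hdepth, P.anc_iff]
  simp only [hdepth, true_and]
end Paper
end
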